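/- With μ₀ = 0 and α₀ = π/6 (so β₀ = π/6), the density f(λ) = (1/(2√(2πλ)))·e^{−λ/2}·[ (1 − erf(√λ tan(π/6)/√2)) + 2(1 − erf(√λ tan(π/6)/√2)) ] simplifies to f(λ) = (3/(2√(2πλ)))·e^{−λ/2}·(1 − erf(√(λ/6))) for λ > 0, and this is a probability density on (0, ∞). -/

import Mathlib

open MeasureTheory Real
open Set Filter intervalIntegral Topology

noncomputable def erf (t : ℝ) : ℝ :=
  (2 / Real.sqrt Real.pi) * ∫ s in (0:ℝ)..t, Real.exp (-s ^ 2)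

/-- The approximating density for the likelihood ratio statistic of model T3. -/
noncomputable def fT3 (α₀ β₀ μ₀ l : ℝ) : ℝ :=
  (1 / (2 * Real.sqrt (2 * Real.pi * l))) *
    (Real.exp (-l / 2) * (1 - erf ((Real.sqrt l * Real.tan β₀ - μ₀) / Real.sqrt 2))
      + Real.exp (-(Real.sqrt l - μ₀ * Real.cos α₀) ^ 2 / 2)
          * (1 - erf ((Real.sqrt l * Real.tan β₀ + μ₀ * Real.sin α₀) / Real.sqrt 2))
      + Real.exp (-(Real.sqrt l + μ₀ * Real.cos α₀) ^ 2 / 2)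
          * (1 - erf ((Real.sqrt l * Real.tan α₀ + μ₀ * Real.sin α₀) / Real.sqrt 2)))

/-- The model-T3 density at the singularity (`μ₀ = 0`, `α₀ = β₀ = π/6`). -/
noncomputable def fSing (l : ℝ) : ℝ :=
  (3 / (2 * Real.sqrt (2 * Real.pi * l))) * Real.exp (-l / 2) * (1 - erf (Real.sqrt (l / 6)))

/- ### Basic properties of `erf` -/

lemma hasDerivAt_erf (t : ℝ) :
    HasDerivAt erf (2 / Real.sqrt Real.pi * Real.exp (-t ^ 2)) t := by
  have hc : Continuous fun s : ℝ => Real.exp (-s ^ 2) := by continuity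
  exact ((hc.integral_hasStrictDerivAt 0 t).hasDerivAt).const_mul _

lemma continuous_erf : Continuous erf :=
  continuous_iff_continuousAt.2 fun t => (hasDerivAt_erf t).continuousAt

lemma erf_zero : erf 0 = 0 := by simp [erf]

lemma integrable_gauss : IntegrableOn (fun s : ℝ => Real.exp (-s ^ 2)) (Ioi 0) := by
  have := (integrable_exp_neg_mul_sq (by norm_num : (0:ℝ) < 1)).integrableOn (s := Ioi 0)
  simpa using this

lemma gauss_Ioi : ∫ s in Ioi (0:ℝ), Real.exp (-s ^ 2) = Real.sqrt Real.pi / 2 := by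
  have := integral_gaussian_Ioi 1
  simpa using this

lemma erf_nonneg' {t : ℝ} (ht : 0 ≤ t) : 0 ≤ erf t := by
  have h1 : 0 ≤ ∫ s in (0:ℝ)..t, Real.exp (-s ^ 2) :=
    intervalIntegral.integral_nonneg ht fun s _ => (Real.exp_pos _).le
  have h2 : (0:ℝ) ≤ 2 / Real.sqrt Real.pi :=
    div_nonneg (by norm_num) (Real.sqrt_nonneg _)
  exact mul_nonneg h2 h1

lemma erf_le_one' {t : ℝ} (ht : 0 ≤ t) : erf t ≤ 1 := by
  have h1 : (∫ s in (0:ℝ)..t, Real.exp (-s ^ 2)) ≤ Real.sqrt Real.pi / 2 := by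
    rw [intervalIntegral.integral_of_le ht, ← gauss_Ioi]
    apply MeasureTheory.setIntegral_mono_set integrable_gauss
    · exact Filter.Eventually.of_forall fun s => (Real.exp_pos _).le
    · exact HasSubset.Subset.eventuallyLE Ioc_subset_Ioi_self
  have hπ : 0 < Real.sqrt Real.pi := Real.sqrt_pos.2 Real.pi_pos
  calc erf t ≤ (2 / Real.sqrt Real.pi) * (Real.sqrt Real.pi / 2) :=
        mul_le_mul_of_nonneg_left h1 (by positivity)
    _ = 1 := by field_simp

lemma tendsto_erf : Tendsto erf atTop (𝓝 1) := by
  have h := MeasureTheory.intervalIntegral_tendsto_integral_Ioi 0 integrable_gauss tendsto_id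
  rw [gauss_Ioi] at h
  have h2 := h.const_mul (2 / Real.sqrt Real.pi)
  have hπ : Real.sqrt Real.pi ≠ 0 := ne_of_gt (Real.sqrt_pos.2 Real.pi_pos)
  have he : 2 / Real.sqrt Real.pi * (Real.sqrt Real.pi / 2) = 1 := by field_simp
  rw [he] at h2
  exact h2

lemma intgauss_eq (T : ℝ) :
    (∫ s in (0:ℝ)..T, Real.exp (-s ^ 2)) = Real.sqrt Real.pi / 2 * erf T := by
  have hπ : Real.sqrt Real.pi ≠ 0 := ne_of_gt (Real.sqrt_pos.2 Real.pi_pos)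
  rw [erf]; field_simp

/- ### The auxiliary (Owen-T-style) integral -/

noncomputable def Sf (l : ℝ) : ℝ :=
  ∫ x in Ioc (0:ℝ) (Real.sqrt 3)⁻¹, Real.exp (-(l * (1 + x ^ 2)) / 2) / (1 + x ^ 2)

lemma Sf_cont_integrand (l : ℝ) : Continuous fun x : ℝ =>
    Real.exp (-(l * (1 + x ^ 2)) / 2) / (1 + x ^ 2) := by
  apply Continuous.div (by continuity) (by continuity)
  intro x; positivity

lemma hasDerivAt_Sf (l₀ : ℝ) :
    HasDerivAt Sf
      (∫ x in Ioc (0:ℝ) (Real.sqrt 3)⁻¹, -Real.exp (-(l₀ * (1 + x ^ 2)) / 2) / 2) l₀ := by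
  set c : ℝ := (Real.sqrt 3)⁻¹ with hc
  have hcont := Sf_cont_integrand
  have hcont' : ∀ l : ℝ, Continuous fun x : ℝ =>
      -Real.exp (-(l * (1 + x ^ 2)) / 2) / 2 := fun l => by continuity
  have key := _root_.hasDerivAt_integral_of_dominated_loc_of_deriv_le
    (μ := volume.restrict (Ioc (0:ℝ) c))
    (F := fun l x => Real.exp (-(l * (1 + x ^ 2)) / 2) / (1 + x ^ 2))
    (F' := fun l x => -Real.exp (-(l * (1 + x ^ 2)) / 2) / 2)
    (x₀ := l₀) (s := Metric.ball l₀ 1) (bound := fun _ => Real.exp ((|l₀| + 1) * (1 + c ^ 2) / 2) / 2)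
    (Metric.ball_mem_nhds l₀ one_pos)
    (Filter.Eventually.of_forall fun l => (hcont l).aestronglyMeasurable)
    ((hcont l₀).integrableOn_Ioc)
    ((hcont' l₀).aestronglyMeasurable) ?_ ?_ ?_
  · exact key.2
  · rw [MeasureTheory.ae_restrict_iff' measurableSet_Ioc]
    apply Filter.Eventually.of_forall
    intro x hx l hl
    rw [Real.norm_eq_abs, abs_div, abs_neg, abs_of_pos (Real.exp_pos _), abs_two]
    have hx2 : x ^ 2 ≤ c ^ 2 := pow_le_pow_left₀ hx.1.le hx.2 2
    have hl' : |l| ≤ |l₀| + 1 := by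
      have hd := Metric.mem_ball.1 hl
      rw [Real.dist_eq] at hd
      calc |l| = |l₀ + (l - l₀)| := by ring_nf
        _ ≤ |l₀| + |l - l₀| := abs_add_le _ _
        _ ≤ |l₀| + 1 := by linarith
    have hexp : Real.exp (-(l * (1 + x ^ 2)) / 2) ≤
        Real.exp ((|l₀| + 1) * (1 + c ^ 2) / 2) := by
      apply Real.exp_le_exp.2
      have h1 : -l ≤ |l| := neg_le_abs l
      have h2 : (0:ℝ) ≤ 1 + x ^ 2 := by positivity
      have h3 : (0:ℝ) ≤ |l| := abs_nonneg l
      nlinarith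
    linarith
  · exact (integrableOn_const_iff).2 (Or.inr measure_Ioc_lt_top)
  · apply Filter.Eventually.of_forall
    intro x l _
    have hk : (0:ℝ) < 1 + x ^ 2 := by positivity
    have h1 : HasDerivAt (fun l : ℝ => -(l * (1 + x ^ 2)) / 2) (-(1 + x ^ 2) / 2) l := by
      have := ((hasDerivAt_id l).mul_const (1 + x ^ 2)).neg.div_const 2
      simpa using this
    have h2 := (h1.exp).div_const (1 + x ^ 2)
    refine h2.congr_deriv ?_
    field_simp

lemma continuous_Sf : Continuous Sf :=
  continuous_iff_continuousAt.2 fun l => (hasDerivAt_Sf l).continuousAt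

lemma sqrt_l6 {l : ℝ} (hl : 0 < l) :
    Real.sqrt (l / 2) * (Real.sqrt 3)⁻¹ = Real.sqrt (l / 6) := by
  rw [show l/6 = l/2/3 by ring, Real.sqrt_div (by positivity : (0:ℝ) ≤ l/2) 3]
  rw [eq_div_iff (by positivity : Real.sqrt 3 ≠ 0)]
  field_simp

lemma Sderiv_eq {l : ℝ} (hl : 0 < l) :
    (∫ x in Ioc (0:ℝ) (Real.sqrt 3)⁻¹, -Real.exp (-(l * (1 + x ^ 2)) / 2) / 2)
      = -(Real.exp (-l/2) / 2) * (Real.sqrt (l/2))⁻¹ * (Real.sqrt Real.pi / 2)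
          * erf (Real.sqrt (l/6)) := by
  have hc : (0:ℝ) ≤ (Real.sqrt 3)⁻¹ := by positivity
  have hA : (0:ℝ) < Real.sqrt (l/2) := Real.sqrt_pos.2 (by positivity)
  rw [← intervalIntegral.integral_of_le hc]
  have hint : ∀ x : ℝ, -Real.exp (-(l * (1 + x ^ 2)) / 2) / 2
      = (-(Real.exp (-l/2)) / 2) * Real.exp (-(Real.sqrt (l/2) * x) ^ 2) := by
    intro x
    have h1 : Real.exp (-(l * (1 + x ^ 2)) / 2)
        = Real.exp (-l/2) * Real.exp (-(l/2 * x ^ 2)) := by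
      rw [← Real.exp_add]; congr 1; ring
    rw [mul_pow, Real.sq_sqrt (by positivity : (0:ℝ) ≤ l/2), h1]
    ring
  simp only [hint]
  rw [intervalIntegral.integral_const_mul]
  rw [intervalIntegral.integral_comp_mul_left (fun s => Real.exp (-s ^ 2)) (ne_of_gt hA)]
  rw [mul_zero, smul_eq_mul, sqrt_l6 hl, intgauss_eq]
  ring

lemma Sf_zero : Sf 0 = Real.pi / 6 := by
  have hc : (0:ℝ) ≤ (Real.sqrt 3)⁻¹ := by positivity
  have h3 : Real.tan (Real.pi/6) = 1 / Real.sqrt 3 := Real.tan_pi_div_six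
  have harc : Real.arctan ((Real.sqrt 3)⁻¹) = Real.pi / 6 := by
    rw [← one_div, ← h3]
    exact Real.arctan_tan (by linarith [Real.pi_pos]) (by linarith [Real.pi_pos])
  rw [Sf]
  simp only [zero_mul, neg_zero, zero_div, Real.exp_zero]
  rw [← intervalIntegral.integral_of_le hc]
  rw [show (fun x : ℝ => (1:ℝ) / (1 + x ^ 2)) = fun x : ℝ => 1 / (1 + x ^ 2) from rfl]
  rw [integral_one_div_one_add_sq, Real.arctan_zero, harc]
  ring

lemma Sf_nonneg (l : ℝ) : 0 ≤ Sf l :=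
  setIntegral_nonneg measurableSet_Ioc fun x _ => by positivity

lemma Sf_le {l : ℝ} (hl : 0 ≤ l) : Sf l ≤ (Real.sqrt 3)⁻¹ * Real.exp (-l/2) := by
  have hc : (0:ℝ) ≤ (Real.sqrt 3)⁻¹ := by positivity
  have hb : ∀ x ∈ Ioc (0:ℝ) (Real.sqrt 3)⁻¹,
      Real.exp (-(l * (1 + x ^ 2)) / 2) / (1 + x ^ 2) ≤ Real.exp (-l/2) := by
    intro x hx
    have hk : (1:ℝ) ≤ 1 + x ^ 2 := by nlinarith [sq_nonneg x]
    calc Real.exp (-(l * (1 + x ^ 2)) / 2) / (1 + x ^ 2)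
        ≤ Real.exp (-(l * (1 + x ^ 2)) / 2) :=
          div_le_self (Real.exp_pos _).le hk
      _ ≤ Real.exp (-l/2) := by
          apply Real.exp_le_exp.2
          nlinarith [sq_nonneg x]
  calc Sf l ≤ ∫ _ in Ioc (0:ℝ) (Real.sqrt 3)⁻¹, Real.exp (-l/2) := by
        apply MeasureTheory.setIntegral_mono_on
          ((Sf_cont_integrand l).integrableOn_Ioc)
          ((integrableOn_const_iff).2 (Or.inr measure_Ioc_lt_top))
          measurableSet_Ioc hb
    _ = (Real.sqrt 3)⁻¹ * Real.exp (-l/2) := by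
        rw [MeasureTheory.setIntegral_const, smul_eq_mul, measureReal_def, Real.volume_Ioc]
        rw [ENNReal.toReal_ofReal (by linarith)]
        ring_nf
  
lemma tendsto_Sf : Tendsto Sf atTop (𝓝 0) := by
  have hup : Tendsto (fun l : ℝ => (Real.sqrt 3)⁻¹ * Real.exp (-l/2)) atTop (𝓝 0) := by
    have h1 : Tendsto (fun l : ℝ => -l/2) atTop atBot := by
      apply Filter.Tendsto.atBot_div_const two_pos
      exact tendsto_neg_atTop_atBot
    have h2 := Real.tendsto_exp_atBot.comp h1
    have h3 := h2.const_mul ((Real.sqrt 3)⁻¹)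
    simpa using h3
  apply tendsto_of_tendsto_of_tendsto_of_le_of_le' tendsto_const_nhds hup
  · exact Filter.Eventually.of_forall fun l => Sf_nonneg l
  · filter_upwards [eventually_ge_atTop (0:ℝ)] with l hl
    exact Sf_le hl

/- ### The antiderivative -/

noncomputable def Hf (l : ℝ) : ℝ :=
  3 / Real.sqrt (2 * Real.pi) *
    (Real.sqrt (Real.pi / 2) * erf (Real.sqrt (l / 2))
      + Real.sqrt (2 / Real.pi) * Sf l)

lemma hasDerivAt_Hf {l : ℝ} (hl : 0 < l) : HasDerivAt Hf (fSing l) l := by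
  have hl2 : (0:ℝ) < l / 2 := by positivity
  have h0 : HasDerivAt (fun x : ℝ => x / 2) ((1:ℝ)/2) l := by
    simpa using (hasDerivAt_id l).div_const 2
  have h1 : HasDerivAt (fun x : ℝ => Real.sqrt (x / 2))
      (1 / (2 * Real.sqrt (l/2)) * (1/2)) l :=
    (Real.hasDerivAt_sqrt (ne_of_gt hl2)).comp l h0
  have h2 : HasDerivAt (fun x : ℝ => erf (Real.sqrt (x / 2)))
      (2 / Real.sqrt Real.pi * Real.exp (-(Real.sqrt (l/2)) ^ 2)
        * (1 / (2 * Real.sqrt (l/2)) * (1/2))) l :=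
    ((hasDerivAt_erf (Real.sqrt (l/2))).comp l h1 : HasDerivAt (erf ∘ fun x : ℝ => Real.sqrt (x / 2)) _ l)
  have h3 := (hasDerivAt_Sf l)
  rw [Sderiv_eq hl] at h3
  have h4 := ((h2.const_mul (Real.sqrt (Real.pi / 2))).add
    (h3.const_mul (Real.sqrt (2 / Real.pi)))).const_mul (3 / Real.sqrt (2 * Real.pi))
  refine h4.congr_deriv ?_
  rw [Real.sq_sqrt hl2.le]
  rw [fSing]
  rw [show (2 * Real.pi * l) = (2 * Real.pi) * l by ring,
    Real.sqrt_mul (by positivity : (0:ℝ) ≤ 2 * Real.pi) l,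
    Real.sqrt_mul (by norm_num : (0:ℝ) ≤ 2) Real.pi,
    Real.sqrt_div (by norm_num : (0:ℝ) ≤ 2) Real.pi,
    Real.sqrt_div Real.pi_pos.le 2,
    Real.sqrt_div hl.le 2]
  have e2 : Real.sqrt 2 ≠ 0 := by positivity
  have eπ : Real.sqrt Real.pi ≠ 0 := ne_of_gt (Real.sqrt_pos.2 Real.pi_pos)
  have el : Real.sqrt l ≠ 0 := ne_of_gt (Real.sqrt_pos.2 hl)
  have hX : (-(l/2) : ℝ) = -l/2 := by ring
  rw [hX]
  generalize erf (Real.sqrt (l/6)) = E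
  generalize Real.exp (-l/2) = X
  have s2sq : Real.sqrt 2 ^ 2 = 2 := Real.sq_sqrt (by norm_num)
  field_simp
  ring_nf
  rw [s2sq]
  ring

lemma continuous_Hf : Continuous Hf := by
  apply Continuous.mul continuous_const
  apply Continuous.add
  · exact continuous_const.mul (continuous_erf.comp (Real.continuous_sqrt.comp
      (continuous_id.div_const 2)))
  · exact continuous_const.mul continuous_Sf

lemma Hf_zero : Hf 0 = 1 / 2 := by
  have eπ : Real.sqrt Real.pi ≠ 0 := ne_of_gt (Real.sqrt_pos.2 Real.pi_pos)
  have e2 : Real.sqrt 2 ≠ 0 := by positivity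
  have sπsq : Real.sqrt Real.pi ^ 2 = Real.pi := Real.sq_sqrt Real.pi_pos.le
  rw [Hf, Sf_zero]
  norm_num [Real.sqrt_zero, erf_zero]
  field_simp
  ring_nf
  rw [sπsq]

lemma tendsto_sqrt_atTop : Tendsto Real.sqrt atTop atTop := by
  apply tendsto_atTop_atTop.2
  intro b
  refine ⟨(max b 0) ^ 2, fun a ha => ?_⟩
  calc b ≤ max b 0 := le_max_left b 0
    _ = Real.sqrt ((max b 0) ^ 2) := (Real.sqrt_sq (le_max_right b 0)).symm
    _ ≤ Real.sqrt a := Real.sqrt_le_sqrt ha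

lemma tendsto_Hf : Tendsto Hf atTop (𝓝 (3 / 2)) := by
  have t1 : Tendsto (fun l : ℝ => erf (Real.sqrt (l / 2))) atTop (𝓝 1) :=
    tendsto_erf.comp (_root_.tendsto_sqrt_atTop.comp (tendsto_id.atTop_div_const two_pos))
  have t2 := ((t1.const_mul (Real.sqrt (Real.pi / 2))).add
    (tendsto_Sf.const_mul (Real.sqrt (2 / Real.pi)))).const_mul
      (3 / Real.sqrt (2 * Real.pi))
  have hval : 3 / Real.sqrt (2 * Real.pi) *
      (Real.sqrt (Real.pi / 2) * 1 + Real.sqrt (2 / Real.pi) * 0) = 3 / 2 := by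
    have eπ : Real.sqrt Real.pi ≠ 0 := ne_of_gt (Real.sqrt_pos.2 Real.pi_pos)
    have e2 : Real.sqrt 2 ≠ 0 := by positivity
    have s2sq : Real.sqrt 2 ^ 2 = 2 := Real.sq_sqrt (by norm_num)
    rw [Real.sqrt_mul (by norm_num : (0:ℝ) ≤ 2) Real.pi,
      Real.sqrt_div Real.pi_pos.le 2]
    field_simp
    ring_nf
    rw [s2sq]
  rw [hval] at t2
  exact t2

theorem stmt_13 :
    (∀ l : ℝ, 0 < l → fT3 (Real.pi / 6) (Real.pi / 6) 0 l = fSing l) ∧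
    (∀ l : ℝ, 0 < l → 0 ≤ fSing l) ∧
    ∫ l in Set.Ioi (0:ℝ), fSing l = 1 := by
  have part2 : ∀ l : ℝ, 0 < l → 0 ≤ fSing l := by
    intro l hl
    rw [fSing]
    have h1 : erf (Real.sqrt (l/6)) ≤ 1 := erf_le_one' (Real.sqrt_nonneg _)
    have h2 : (0:ℝ) ≤ 1 - erf (Real.sqrt (l/6)) := by linarith
    have h3 : (0:ℝ) ≤ 3 / (2 * Real.sqrt (2 * Real.pi * l)) := by positivity
    exact mul_nonneg (mul_nonneg h3 (Real.exp_pos _).le) h2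
  refine ⟨?_, part2, ?_⟩
  · -- part 1
    intro l hl
    have hsq : Real.sqrt l ^ 2 = l := Real.sq_sqrt hl.le
    have harg : Real.sqrt l * (1 / Real.sqrt 3) / Real.sqrt 2 = Real.sqrt (l / 6) := by
      rw [show l / 6 = l / 2 / 3 by ring, Real.sqrt_div (by positivity : (0:ℝ) ≤ l/2) 3,
        Real.sqrt_div hl.le 2]
      have e2 : Real.sqrt 2 ≠ 0 := by positivity
      have e3 : Real.sqrt 3 ≠ 0 := by positivity
      field_simp
    rw [fT3, fSing, Real.tan_pi_div_six]
    simp only [mul_zero, zero_mul, sub_zero, add_zero]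
    rw [harg, hsq]
    ring
  · -- part 3
    have key := integral_Ioi_of_hasDerivAt_of_nonneg (g := Hf) (g' := fSing)
      (continuous_Hf.continuousWithinAt)
      (fun x hx => hasDerivAt_Hf hx)
      (fun x hx => part2 x hx) tendsto_Hf
    rw [key, Hf_zero]
    norm_num
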